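/- arXiv:1703.07173 — 2 statements merged into one kernel-verified Lean document; each statement's English description precedes it below -/
import Mathlib

section
/- Let d ≥ 4, S = ℂ[x,y,z], J = (x^{d-1}, y^{d-1}, z^{d-1}), R = S/J. The image of the multiplication map R^{d-3} → R^{2d-3} given by multiplication by the class of x^{d-2}y^2 has dimension exactly d-3, spanned by the classes of x^{d-2} y^{2+a} z^{d-3-a} for 0 ≤ a ≤ d-4. -/
/-!
Modulo `J = (x^{d-1}, y^{d-1}, z^{d-1})` every monomial with an exponent `≥ d - 1` vanishes, while
the classes of the remaining monomials are linearly independent. Multiplying a monomial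
`x^i y^j z^k` of degree `d - 3` by `ξ = x^{d-2} y^2` gives `x^{d-2+i} y^{2+j} z^k`, which survives
only when `i = 0` and `j ≤ d - 4`; the survivors are the `d - 3` distinct monomials
`x^{d-2} y^{2+a} z^{d-3-a}`.
-/

open MvPolynomial Module

/-- Both sides are `0` when `s` is infinite, so no finiteness hypothesis is needed. -/
theorem LinearIndepOn.finrank_span_image {K M ι : Type*} [DivisionRing K] [AddCommGroup M]
    [Module K M] {v : ι → M} {s : Set ι} (hv : LinearIndepOn K v s) :
    finrank K (Submodule.span K (v '' s)) = s.ncard := by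
  rw [finrank, rank_span_set hv.id_image, ← hv.injOn.ncard_image]
  rfl

namespace MvPolynomial

variable {σ R : Type*} [CommRing R]

theorem mk_monomial_eq_zero_of_le {s : Set (σ →₀ ℕ)} {si m : σ →₀ ℕ} (hsi : si ∈ s)
    (hle : si ≤ m) (r : R) :
    Ideal.Quotient.mk (Ideal.span ((fun s => monomial s (1 : R)) '' s)) (monomial m r) = 0 := by
  rw [Ideal.Quotient.eq_zero_iff_mem, mem_ideal_span_monomial_image]
  intro xi hxi
  rw [Finset.mem_singleton.mp (support_monomial_subset hxi)]
  exact ⟨si, hsi, hle⟩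

theorem coeff_linearCombination_monomial (l : (σ →₀ ℕ) →₀ R) (m : σ →₀ ℕ) :
    coeff m (Finsupp.linearCombination R (fun m => (monomial m 1 : MvPolynomial σ R)) l) =
      l m := by
  classical
  rw [Finsupp.linearCombination_apply, Finsupp.sum, coeff_sum]
  simp [coeff_monomial, eq_comm]

theorem linearIndepOn_mk_monomial (s : Set (σ →₀ ℕ)) :
    LinearIndepOn R
      (fun m => Ideal.Quotient.mk (Ideal.span ((fun s => monomial s (1 : R)) '' s)) (monomial m 1))
      {m | ∀ si ∈ s, ¬ si ≤ m} := by
  rw [linearIndepOn_iff]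
  intro l hl hl0
  set p := Finsupp.linearCombination R (fun m => (monomial m 1 : MvPolynomial σ R)) l
  have hp : p ∈ Ideal.span ((fun s => monomial s (1 : R)) '' s) := by
    rw [← Ideal.Quotient.eq_zero_iff_mem, ← hl0]
    exact Finsupp.apply_linearCombination R (Ideal.Quotient.mkₐ R _).toLinearMap _ l
  ext m
  by_contra hm
  obtain ⟨si, hsi, hle⟩ := mem_ideal_span_monomial_image.mp hp m
    (by rwa [mem_support_iff, coeff_linearCombination_monomial])
  exact hl (Finsupp.mem_support_iff.mpr hm) si hsi hle

theorem homogeneousSubmodule_eq_span_monomial (n : ℕ) :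
    homogeneousSubmodule σ R n =
      Submodule.span R ((fun m => monomial m 1) '' {m | m.degree = n}) := by
  rw [homogeneousSubmodule_eq_finsupp_supported, AddMonoidAlgebra.supported_eq_span_single]
  rfl

theorem map_mulLeft_monomial_map_mk_homogeneousSubmodule (I : Ideal (MvPolynomial σ R))
    (e : σ →₀ ℕ) (n : ℕ) :
    ((homogeneousSubmodule σ R n).map (Ideal.Quotient.mkₐ R I).toLinearMap).map
        (LinearMap.mulLeft R (Ideal.Quotient.mk I (monomial e 1))) =
      Submodule.span R
        ((fun m => Ideal.Quotient.mk I (monomial (e + m) 1)) '' {m | m.degree = n}) := by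
  simp only [homogeneousSubmodule_eq_span_monomial, Submodule.map_span, Set.image_image]
  congr 2 with m
  simp [← map_mul, monomial_mul]

variable (σ R) in
noncomputable def spanXPow (n : ℕ) : Ideal (MvPolynomial σ R) :=
  Ideal.span (Set.range fun i => X i ^ n)

theorem spanXPow_eq_span_monomial (n : ℕ) :
    spanXPow σ R n =
      Ideal.span ((fun s => monomial s 1) '' Set.range fun i => Finsupp.single i n) := by
  simp only [spanXPow, ← Set.range_comp, Function.comp_def, X_pow_eq_monomial]

theorem spanXPow_fin_three (n : ℕ) :
    spanXPow (Fin 3) R n = Ideal.span {X 0 ^ n, X 1 ^ n, X 2 ^ n} := by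
  rw [spanXPow]
  congr 1
  ext p
  simp [Fin.exists_fin_succ, eq_comm]

theorem mk_spanXPow_monomial_eq_zero {n : ℕ} {m : σ →₀ ℕ} {i : σ} (h : n ≤ m i) (r : R) :
    Ideal.Quotient.mk (spanXPow σ R n) (monomial m r) = 0 := by
  rw [spanXPow_eq_span_monomial]
  exact mk_monomial_eq_zero_of_le (Set.mem_range_self i) (Finsupp.single_le_iff.mpr h) r

theorem linearIndepOn_mk_spanXPow_monomial (n : ℕ) :
    LinearIndepOn R (fun m => Ideal.Quotient.mk (spanXPow σ R n) (monomial m 1))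
      {m | ∀ i, m i < n} := by
  rw [spanXPow_eq_span_monomial]
  refine (linearIndepOn_mk_monomial _).mono ?_
  rintro m hm _ ⟨i, rfl⟩
  simpa [Finsupp.single_le_iff] using hm i

end MvPolynomial

section FermatJacobianRing

noncomputable def xiImageExponent (d a : ℕ) : Fin 3 →₀ ℕ :=
  Finsupp.single 0 (d - 2) + Finsupp.single 1 (2 + a) + Finsupp.single 2 (d - 3 - a)

variable {R : Type*} [CommRing R]

theorem span_mk_monomial_xi_add_eq (d : ℕ) :
    Submodule.span R ((fun m => Ideal.Quotient.mk (spanXPow (Fin 3) R (d - 1))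
        (monomial (Finsupp.single 0 (d - 2) + Finsupp.single 1 2 + m) 1)) ''
          {m | m.degree = d - 3}) =
      Submodule.span R ((fun a => Ideal.Quotient.mk (spanXPow (Fin 3) R (d - 1))
        (monomial (xiImageExponent d a) 1)) '' {a | a ≤ d - 4}) := by
  refine le_antisymm ((Submodule.span_mono ?_).trans_eq Submodule.span_insert_zero)
    (Submodule.span_mono ?_)
  · rintro _ ⟨m, hdeg, rfl⟩
    have hm : m 0 + m 1 + m 2 = d - 3 := by
      simpa [Finsupp.degree_eq_sum, Fin.sum_univ_three] using hdeg
    by_cases h0 : m 0 = 0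
    · by_cases h1 : m 1 ≤ d - 4
      · have he : Finsupp.single 0 (d - 2) + Finsupp.single 1 2 + m =
            xiImageExponent d (m 1) := by
          ext i
          fin_cases i <;> simp [xiImageExponent] <;> omega
        exact Or.inr ⟨m 1, h1, by dsimp only; rw [he]⟩
      · exact Or.inl (mk_spanXPow_monomial_eq_zero (i := 1) (by simp; omega) _)
    · exact Or.inl (mk_spanXPow_monomial_eq_zero (i := 0) (by simp; omega) _)
  · rintro _ ⟨a, ha : a ≤ d - 4, rfl⟩
    have he : Finsupp.single 0 (d - 2) + Finsupp.single 1 2 +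
        (Finsupp.single 1 a + Finsupp.single 2 (d - 3 - a)) = xiImageExponent d a := by
      ext i
      fin_cases i <;> simp [xiImageExponent]
    refine ⟨Finsupp.single 1 a + Finsupp.single 2 (d - 3 - a), ?_, by dsimp only; rw [he]⟩
    simp [Finsupp.degree_eq_sum, Fin.sum_univ_three]
    omega

theorem linearIndepOn_mk_monomial_xiImageExponent {d : ℕ} (hd : 4 ≤ d) :
    LinearIndepOn R (fun a => Ideal.Quotient.mk (spanXPow (Fin 3) R (d - 1))
      (monomial (xiImageExponent d a) 1)) {a | a ≤ d - 4} := by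
  refine ((linearIndepOn_mk_spanXPow_monomial _).mono ?_).comp_of_image ?_
  · rintro _ ⟨a, ha, rfl⟩ i
    fin_cases i <;> simp [xiImageExponent] at ha ⊢ <;> omega
  · intro a _ b _ hab
    simpa [xiImageExponent] using DFunLike.congr_fun hab 1

end FermatJacobianRing

/-- For the Jacobian ring `R` of the Fermat curve of degree `d ≥ 4`, the image of the
multiplication map `R^{d-3} → R^{2d-3}` by the class `ξ = [x^{d-2} y^2]` is spanned by the
classes of `x^{d-2} y^{2+a} z^{d-3-a}` for `0 ≤ a ≤ d-4`, and has dimension exactly `d-3`. -/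
theorem fermat_xi_rank (d : ℕ) (hd : 4 ≤ d) :
    let S := MvPolynomial (Fin 3) ℂ
    let J : Ideal S := Ideal.span {X 0 ^ (d - 1), X 1 ^ (d - 1), X 2 ^ (d - 1)}
    let mk := (Ideal.Quotient.mkₐ ℂ J).toLinearMap
    let ξ := Ideal.Quotient.mk J (X 0 ^ (d - 2) * X 1 ^ 2)
    let im := Submodule.map (LinearMap.mulLeft ℂ ξ)
        (Submodule.map mk (homogeneousSubmodule (Fin 3) ℂ (d - 3)))
    im = Submodule.span ℂ
        ((fun a => Ideal.Quotient.mk J (X 0 ^ (d - 2) * X 1 ^ (2 + a) * X 2 ^ (d - 3 - a))) ''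
          {a : ℕ | a ≤ d - 4}) ∧
      finrank ℂ im = d - 3 := by
  intro S J mk ξ im
  have hJ : J = spanXPow (Fin 3) ℂ (d - 1) := (spanXPow_fin_three _).symm
  have hξ : X 0 ^ (d - 2) * X 1 ^ 2 =
      (monomial (Finsupp.single 0 (d - 2) + Finsupp.single 1 2) 1 : S) := by
    simp [X_pow_eq_monomial, monomial_mul]
  have hgen : ∀ a, X 0 ^ (d - 2) * X 1 ^ (2 + a) * X 2 ^ (d - 3 - a) =
      (monomial (xiImageExponent d a) 1 : S) := by
    simp [X_pow_eq_monomial, monomial_mul, xiImageExponent]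
  have hspan : im = Submodule.span ℂ
      ((fun a => Ideal.Quotient.mk J (monomial (xiImageExponent d a) 1)) '' {a | a ≤ d - 4}) := by
    simp only [im, ξ, mk, hξ]
    rw [hJ, map_mulLeft_monomial_map_mk_homogeneousSubmodule, span_mk_monomial_xi_add_eq]
  simp only [hgen]
  refine ⟨hspan, ?_⟩
  rw [hspan, hJ, (linearIndepOn_mk_monomial_xiImageExponent hd).finrank_span_image]
  change (Set.Iic (d - 4)).ncard = d - 3
  rw [Set.ncard_Iic_nat]
  omega
end

section
/- Let d ≥ 4, J = (x^{d-1}, y^{d-1}, z^{d-1}) ⊂ ℂ[x,y,z], and W ⊂ S^{d-3} the kernel of multiplication by x^{d-2}y^2 into R^{2d-3} = (S/J)^{2d-3}. Then W contains x^{d-3} and y^{d-3} but not z^{d-3}. -/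
open MvPolynomial

/-- Let `W ⊂ S^{d-3}` be the kernel of multiplication by `x^{d-2} y^2` from `S^{d-3}` into
the Jacobian ring of the Fermat curve of degree `d ≥ 4`. Then `W` contains `x^{d-3}` and
`y^{d-3}` but not `z^{d-3}`. -/
theorem fermat_kernel_base_point (d : ℕ) (hd : 4 ≤ d) :
    let S := MvPolynomial (Fin 3) ℂ
    let J : Ideal S := Ideal.span {X 0 ^ (d - 1), X 1 ^ (d - 1), X 2 ^ (d - 1)}
    let W : Submodule ℂ S := homogeneousSubmodule (Fin 3) ℂ (d - 3) ⊓
      LinearMap.ker ((Ideal.Quotient.mkₐ ℂ J).toLinearMap.comp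
        (LinearMap.mulLeft ℂ (X 0 ^ (d - 2) * X 1 ^ 2)))
    X 0 ^ (d - 3) ∈ W ∧ X 1 ^ (d - 3) ∈ W ∧ X 2 ^ (d - 3) ∉ W := by
  intro S J W
  have hsetX : (X 0 ^ (d-1) : S) ∈ ({X 0 ^ (d - 1), X 1 ^ (d - 1), X 2 ^ (d - 1)} : Set S) := by
    simp
  have hsetY : (X 1 ^ (d-1) : S) ∈ ({X 0 ^ (d - 1), X 1 ^ (d - 1), X 2 ^ (d - 1)} : Set S) := by
    simp
  have hker : ∀ p : S, (X 0 ^ (d - 2) * X 1 ^ 2) * p ∈ J →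
      p ∈ LinearMap.ker ((Ideal.Quotient.mkₐ ℂ J).toLinearMap.comp
        (LinearMap.mulLeft ℂ (X 0 ^ (d - 2) * X 1 ^ 2))) := by
    intro p hp
    simp only [LinearMap.mem_ker, LinearMap.comp_apply, LinearMap.mulLeft_apply,
      AlgHom.toLinearMap_apply, Ideal.Quotient.mkₐ_eq_mk]
    rwa [Ideal.Quotient.eq_zero_iff_mem]
  refine ⟨⟨?_, hker _ ?_⟩, ⟨?_, hker _ ?_⟩, ?_⟩
  · rw [SetLike.mem_coe, mem_homogeneousSubmodule]
    simpa using (isHomogeneous_X ℂ 0).pow (d - 3)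
  · have e : d - 2 + (d - 3) = d - 1 + (d - 4) := by omega
    have : ((X 0 ^ (d - 2) * X 1 ^ 2) * X 0 ^ (d - 3) : S)
        = X 0 ^ (d-1) * (X 0 ^ (d-4) * X 1 ^ 2) := by
      calc ((X 0 ^ (d - 2) * X 1 ^ 2) * X 0 ^ (d - 3) : S)
          = (X 0 ^ (d - 2 + (d - 3)) * X 1 ^ 2 : S) := by ring
        _ = X 0 ^ (d-1) * (X 0 ^ (d-4) * X 1 ^ 2) := by rw [e, pow_add]; ring
    rw [this]
    exact Ideal.mul_mem_right _ _ (Ideal.subset_span hsetX)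
  · rw [SetLike.mem_coe, mem_homogeneousSubmodule]
    simpa using (isHomogeneous_X ℂ 1).pow (d - 3)
  · have e : 2 + (d - 3) = d - 1 := by omega
    have : ((X 0 ^ (d - 2) * X 1 ^ 2) * X 1 ^ (d - 3) : S)
        = X 1 ^ (d-1) * X 0 ^ (d-2) := by
      calc ((X 0 ^ (d - 2) * X 1 ^ 2) * X 1 ^ (d - 3) : S)
          = (X 1 ^ (2 + (d - 3)) * X 0 ^ (d-2) : S) := by ring
        _ = X 1 ^ (d-1) * X 0 ^ (d-2) := by rw [e]
    rw [this]
    exact Ideal.mul_mem_right _ _ (Ideal.subset_span hsetY)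
  · rintro ⟨-, hk⟩
    have hmem : (X 0 ^ (d - 2) * X 1 ^ 2) * X 2 ^ (d - 3) ∈ J := by
      have := hk
      simp only [SetLike.mem_coe, LinearMap.mem_ker, LinearMap.comp_apply, LinearMap.mulLeft_apply,
        AlgHom.toLinearMap_apply, Ideal.Quotient.mkₐ_eq_mk] at this
      rwa [Ideal.Quotient.eq_zero_iff_mem] at this
    have himg : ({X 0 ^ (d - 1), X 1 ^ (d - 1), X 2 ^ (d - 1)} : Set S)
        = (fun s => monomial s (1 : ℂ)) ''
          {Finsupp.single 0 (d-1), Finsupp.single 1 (d-1), Finsupp.single 2 (d-1)} := by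
      simp [Set.image_insert_eq, X_pow_eq_monomial]
    rw [show J = Ideal.span _ from rfl, himg, mem_ideal_span_monomial_image] at hmem
    set m : Fin 3 →₀ ℕ := Finsupp.single 0 (d-2) + Finsupp.single 1 2 + Finsupp.single 2 (d-3)
      with hm
    have hprod : (X 0 ^ (d - 2) * X 1 ^ 2) * X 2 ^ (d - 3) = (monomial m (1 : ℂ)) := by
      simp [hm, X_pow_eq_monomial, monomial_mul]
    have hms : m ∈ ((X 0 ^ (d - 2) * X 1 ^ 2) * X 2 ^ (d - 3) : S).support := by
      rw [hprod]
      simp [support_monomial]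
    obtain ⟨si, hsi, hle⟩ := hmem m hms
    have h0 : m 0 = d - 2 := by simp [hm, Finsupp.single_apply]
    have h1 : m 1 = 2 := by simp [hm, Finsupp.single_apply]
    have h2 : m 2 = d - 3 := by simp [hm, Finsupp.single_apply]
    rcases hsi with rfl | rfl | rfl
    · rw [Finsupp.single_le_iff, h0] at hle; omega
    · rw [Finsupp.single_le_iff, h1] at hle; omega
    · rw [Finsupp.single_le_iff, h2] at hle; omega
end
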